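/- arXiv:math/9509204 — 2 statements merged into one kernel-verified Lean document; each statement's English description precedes it below -/
import Mathlib

section
/- Let G be a finitely generated group containing a finitely generated free subgroup of finite index (i.e. there is a subgroup H ≤ G of finite index and an isomorphism H ≅ FreeGroup (Fin n) for some n), and let σ : Σ* → G be a surjective monoid homomorphism from a free monoid over a finite alphabet. Then the word problem σ⁻¹(1) ⊆ Σ* is a context-free language. -/
/-!
Fix a right transversal `T` of `H` and write each `g : G` as `h * t` with `h ∈ H ≅ F(n)` and
`t ∈ T`. Reading a word letter by letter from some `t ∈ T` traces a path in the Cayley tree of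
`F(n)` whose steps have length at most some `C`. A path in a tree passes within `C` of the midpoint
of the geodesic joining its endpoints, so every word of length at least two whose path ends within
`4C + 4` of its start splits into two nonempty subwords with the same property. Hence the finitely
many elements represented by such words, taken as nonterminals with rules `g₁g₂ → g₁ g₂`,
`σ(a) → a` and `1 → ε`, form a grammar generating exactly the words that represent `1`.
-/

namespace FreeGroup

variable {β : Type*} [DecidableEq β]

theorem finite_setOf_norm_le [Finite β] (K : ℕ) : {x : FreeGroup β | norm x ≤ K}.Finite :=
  (List.finite_length_le _ K).preimage toWord_injective.injOn

theorem norm_mk_of_isReduced {L : List (β × Bool)} (h : IsReduced L) : norm (mk L) = L.length := by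
  rw [norm, toWord_mk, h.reduce_eq]

theorem exists_norm_eq_and_norm_inv_mul_eq (x : FreeGroup β) {j : ℕ} (hj : j ≤ norm x) :
    ∃ v, norm v = j ∧ norm (v⁻¹ * x) = norm x - j := by
  have hx : mk (x.toWord.take j) * mk (x.toWord.drop j) = x := by
    rw [mul_mk, List.take_append_drop, mk_toWord]
  refine ⟨mk (x.toWord.take j), ?_, ?_⟩
  · rw [norm_mk_of_isReduced (isReduced_toWord.infix (List.take_prefix j _).isInfix),
      List.length_take]
    exact min_eq_left hj
  · rw [inv_mul_eq_iff_eq_mul.mpr hx.symm,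
      norm_mk_of_isReduced (isReduced_toWord.infix (List.drop_suffix j _).isInfix),
      List.length_drop]
    rfl

/-- `1` lies on a geodesic from `x` to `y` in the Cayley tree of the free group. -/
def OneBetween (x y : FreeGroup β) : Prop :=
  norm (x⁻¹ * y) = norm x + norm y

theorem oneBetween_of_head? {x y : FreeGroup β}
    (h : ∀ p ∈ x.toWord.head?, p ∉ y.toWord.head?) : OneBetween x y := by
  have hred : IsReduced (x⁻¹.toWord ++ y.toWord) := by
    refine List.isChain_append.mpr ⟨isReduced_toWord, isReduced_toWord, ?_⟩
    intro a ha b hb hab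
    rw [toWord_inv, invRev, List.getLast?_reverse, List.head?_map, Option.mem_map] at ha
    obtain ⟨p, hp, rfl⟩ := ha
    by_contra hne
    refine h p hp ?_
    obtain rfl : p = b := Prod.ext hab (by simpa using hne)
    exact hb
  rw [OneBetween, ← norm_inv_eq (x := x), ← mk_toWord (x := x⁻¹), ← mk_toWord (x := y), mul_mk,
    norm_mk_of_isReduced hred, List.length_append, mk_toWord, mk_toWord]
  rfl

theorem OneBetween.notMem_head? {x y : FreeGroup β} (h : OneBetween x y) {p : β × Bool}
    (hx : p ∈ x.toWord.head?) : p ∉ y.toWord.head? := by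
  intro hy
  obtain ⟨s, hs⟩ : ∃ s, x.toWord = p :: s := by
    rcases hw : x.toWord with _ | ⟨q, s⟩ <;> simp_all
  obtain ⟨t, ht⟩ : ∃ t, y.toWord = p :: t := by
    rcases hw : y.toWord with _ | ⟨q, t⟩ <;> simp_all
  have hxy : x⁻¹ * y = (mk s)⁻¹ * mk t := by
    rw [← mk_toWord (x := x), ← mk_toWord (x := y), hs, ht, ← List.singleton_append,
      ← List.singleton_append (l := t), ← mul_mk, ← mul_mk]
    group
  have hle : norm (x⁻¹ * y) ≤ s.length + t.length := by
    rw [hxy]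
    exact (norm_mul_le _ _).trans (by rw [norm_inv_eq]; exact add_le_add norm_mk_le norm_mk_le)
  rw [h, norm, norm, hs, ht, List.length_cons, List.length_cons] at hle
  omega

theorem OneBetween.or {x y : FreeGroup β} (h : OneBetween x y) (z : FreeGroup β) :
    OneBetween x z ∨ OneBetween z y := by
  by_contra! hc
  obtain ⟨p, hxp, hzp⟩ : ∃ p ∈ x.toWord.head?, p ∈ z.toWord.head? := by
    by_contra! h'; exact hc.1 (oneBetween_of_head? h')
  obtain ⟨q, hzq, hyq⟩ : ∃ q ∈ z.toWord.head?, q ∈ y.toWord.head? := by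
    by_contra! h'; exact hc.2 (oneBetween_of_head? h')
  obtain rfl : p = q := Option.mem_unique hzp hzq
  exact h.notMem_head? hxp hyq

theorem OneBetween.norm_le {x y : FreeGroup β} (h : OneBetween x y) : norm x ≤ norm (x⁻¹ * y) :=
  h ▸ Nat.le_add_right _ _

theorem OneBetween.eq_one {x : FreeGroup β} (h : OneBetween x x) : x = 1 := by
  rw [OneBetween, inv_mul_cancel, norm_one] at h
  exact norm_eq_zero.mp (by omega)

theorem exists_norm_le_of_oneBetween {C : ℕ} : ∀ (m : ℕ) (g : ℕ → FreeGroup β),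
    (∀ i < m, norm ((g i)⁻¹ * g (i + 1)) ≤ C) → OneBetween (g 0) (g m) →
    ∃ i ≤ m, norm (g i) ≤ C
  | 0, g, _, h => ⟨0, le_rfl, by rw [h.eq_one, norm_one]; exact Nat.zero_le C⟩
  | m + 1, g, hstep, h => by
    rcases h.or (g 1) with h01 | h1m
    · exact ⟨0, Nat.zero_le _, h01.norm_le.trans (hstep 0 m.succ_pos)⟩
    · obtain ⟨i, him, hi⟩ := exists_norm_le_of_oneBetween m (fun i => g (i + 1))
        (fun i hi => hstep (i + 1) (by omega)) h1m
      exact ⟨i + 1, by omega, hi⟩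

theorem exists_split_of_norm_le {C m : ℕ} (f : ℕ → FreeGroup β) (h0 : f 0 = 1)
    (hstep : ∀ i < m, norm ((f i)⁻¹ * f (i + 1)) ≤ C) (hm : 2 ≤ m)
    (hK : norm (f m) ≤ 4 * C + 4) :
    ∃ i, 0 < i ∧ i < m ∧ norm (f i) ≤ 4 * C + 4 ∧ norm ((f i)⁻¹ * f m) ≤ 4 * C + 4 := by
  have hf1 : norm (f 1) ≤ C := by simpa [h0] using hstep 0 (by omega)
  by_cases hsmall : norm (f m) ≤ 2 * C + 2
  · refine ⟨1, one_pos, hm, by omega, ?_⟩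
    calc norm ((f 1)⁻¹ * f m) ≤ norm (f 1) + norm (f m) := by
          simpa using norm_mul_le (f 1)⁻¹ (f m)
      _ ≤ 4 * C + 4 := by omega
  -- The path `f` must pass within `C` of the midpoint `v` of the geodesic from `1` to `f m`.
  obtain ⟨v, hv, hvm⟩ := exists_norm_eq_and_norm_inv_mul_eq (f m) (Nat.div_le_self (norm (f m)) 2)
  have hmid : OneBetween (v⁻¹ * f 0) (v⁻¹ * f m) := by
    rw [OneBetween, h0, mul_one, inv_inv, mul_inv_cancel_left, norm_inv_eq, hv, hvm]
    omega
  obtain ⟨i, him, hi⟩ := exists_norm_le_of_oneBetween m (fun k => v⁻¹ * f k)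
    (fun k hk => by simpa [mul_assoc] using hstep k hk) hmid
  have hi_ne_zero : i ≠ 0 := by
    rintro rfl
    rw [h0, mul_one, norm_inv_eq] at hi
    omega
  have hi_ne_m : i ≠ m := by
    rintro rfl
    omega
  refine ⟨i, by omega, by omega, ?_, ?_⟩
  · calc norm (f i) = norm (v * (v⁻¹ * f i)) := by rw [mul_inv_cancel_left]
      _ ≤ norm v + norm (v⁻¹ * f i) := norm_mul_le _ _
      _ ≤ 4 * C + 4 := by omega
  · calc norm ((f i)⁻¹ * f m) = norm ((v⁻¹ * f i)⁻¹ * (v⁻¹ * f m)) := by group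
      _ ≤ norm (v⁻¹ * f i) + norm (v⁻¹ * f m) := by
          rw [← norm_inv_eq (x := v⁻¹ * f i)]; exact norm_mul_le _ _
      _ ≤ 4 * C + 4 := by omega

end FreeGroup

namespace ContextFreeGrammar

variable {T : Type*} {g : ContextFreeGrammar T} {M : Type*} [Monoid M]

theorem Derives.prod_map_eq {φ : Symbol T g.NT → M}
    (hφ : ∀ r ∈ g.rules, (r.output.map φ).prod = φ (.nonterminal r.input))
    {u v : List (Symbol T g.NT)} (h : g.Derives u v) : (v.map φ).prod = (u.map φ).prod := by
  induction h with
  | refl => rfl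
  | tail _ huv ih =>
    obtain ⟨r, hr, hrw⟩ := huv
    obtain ⟨p, q, rfl, rfl⟩ := hrw.exists_parts
    rw [← ih]
    simp only [List.map_append, List.prod_append, hφ r hr, List.map_singleton,
      List.prod_singleton]

end ContextFreeGrammar

namespace FreeMonoid

variable {α M : Type*} [Monoid M]

theorem hom_ofList (σ : FreeMonoid α →* M) (w : List α) :
    σ (ofList w) = (w.map (σ ∘ of)).prod := by
  rw [← lift_ofList, lift_restrict]

end FreeMonoid

open FreeMonoid in
def IsSplittingSet {α M : Type*} [Monoid M] (σ : FreeMonoid α →* M) (S : Set M) : Prop :=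
  ∀ w : List α, 2 ≤ w.length → σ (ofList w) ∈ S →
    ∃ i, 0 < i ∧ i < w.length ∧ σ (ofList (w.take i)) ∈ S ∧ σ (ofList (w.drop i)) ∈ S

section SplittingGrammar

open FreeMonoid

variable {α M : Type} [Fintype α] [DecidableEq α] [Monoid M] [DecidableEq M]
  (σ : FreeMonoid α →* M) (S : Finset M)

def splittingRules : Finset (ContextFreeRule α M) :=
  {⟨1, []⟩} ∪ Finset.univ.image (fun a => ⟨σ (of a), [.terminal a]⟩) ∪
    (S ×ˢ S).image fun p => ⟨p.1 * p.2, [.nonterminal p.1, .nonterminal p.2]⟩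

abbrev splittingGrammar (m : M) : ContextFreeGrammar α :=
  ⟨M, m, splittingRules σ S⟩

def symbolValue : Symbol α M → M
  | .terminal a => σ (of a)
  | .nonterminal g => g

theorem prod_map_symbolValue_of_mem_splittingRules {r : ContextFreeRule α M}
    (hr : r ∈ splittingRules σ S) :
    (r.output.map (symbolValue σ)).prod = r.input := by
  rcases Finset.mem_union.mp hr with hr | hr
  · rcases Finset.mem_union.mp hr with hr | hr
    · rw [Finset.mem_singleton.mp hr]; rfl
    · obtain ⟨a, -, rfl⟩ := Finset.mem_image.mp hr
      simp [symbolValue]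
  · obtain ⟨p, -, rfl⟩ := Finset.mem_image.mp hr
    simp [symbolValue]

theorem eq_of_mem_language_splittingGrammar {m : M} {w : List α}
    (hw : w ∈ (splittingGrammar σ S m).language) : σ (ofList w) = m := by
  have := hw.prod_map_eq (φ := symbolValue σ)
    fun r hr => prod_map_symbolValue_of_mem_splittingRules σ S hr
  simpa [hom_ofList, symbolValue, Function.comp_def] using this

theorem splittingGrammar_derives_append {m : M} {u v : List α} (hu : σ (ofList u) ∈ S)
    (hv : σ (ofList v) ∈ S)
    (du : (splittingGrammar σ S m).Derives [.nonterminal (σ (ofList u))] (u.map .terminal))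
    (dv : (splittingGrammar σ S m).Derives [.nonterminal (σ (ofList v))] (v.map .terminal)) :
    (splittingGrammar σ S m).Derives [.nonterminal (σ (ofList (u ++ v)))]
      ((u ++ v).map .terminal) := by
  have hmem : (⟨σ (ofList u) * σ (ofList v),
      [.nonterminal (σ (ofList u)), .nonterminal (σ (ofList v))]⟩ : ContextFreeRule α M) ∈
      splittingRules σ S :=
    Finset.mem_union_right _ (Finset.mem_image.mpr ⟨(_, _), Finset.mem_product.mpr ⟨hu, hv⟩, rfl⟩)
  have hrule : (splittingGrammar σ S m).Produces [.nonterminal (σ (ofList (u ++ v)))]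
      ([.nonterminal (σ (ofList u))] ++ [.nonterminal (σ (ofList v))]) := by
    refine ⟨_, hmem, ?_⟩
    rw [ofList_append, map_mul]
    exact ContextFreeRule.Rewrites.input_output
  rw [List.map_append]
  exact hrule.trans_derives ((du.append_right _).trans (dv.append_left _))

theorem splittingGrammar_derives {m : M} (hS : IsSplittingSet σ (S : Set M)) :
    ∀ w : List α, σ (ofList w) ∈ S →
      (splittingGrammar σ S m).Derives [.nonterminal (σ (ofList w))] (w.map .terminal)
  | [], _ => ContextFreeGrammar.Produces.single ⟨⟨(1 : M), []⟩,
      Finset.mem_union_left _ (Finset.mem_union_left _ (Finset.mem_singleton_self _)),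
      by rw [ofList_nil, map_one]; exact ContextFreeRule.Rewrites.input_output⟩
  | [a], _ => ContextFreeGrammar.Produces.single ⟨⟨σ (of a), [.terminal a]⟩,
      Finset.mem_union_left _ (Finset.mem_union_right _
        (Finset.mem_image_of_mem _ (Finset.mem_univ a))),
      ContextFreeRule.Rewrites.input_output⟩
  | a :: b :: l, hw => by
    obtain ⟨i, hi0, hil, hu, hv⟩ := hS (a :: b :: l) (by simp) hw
    simpa only [List.take_append_drop] using splittingGrammar_derives_append σ S hu hv
      (splittingGrammar_derives hS _ hu) (splittingGrammar_derives hS _ hv)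
termination_by w => w.length
decreasing_by all_goals simp only [List.length_take, List.length_drop]; omega

theorem isContextFree_setOf_eq_of_isSplittingSet {S : Set M} (hS : S.Finite) {m : M}
    (hm : m ∈ S) (hsplit : IsSplittingSet σ S) :
    Language.IsContextFree {w : List α | σ (ofList w) = m} := by
  refine ⟨splittingGrammar σ hS.toFinset m, Set.ext fun w => ⟨?_, ?_⟩⟩
  · exact eq_of_mem_language_splittingGrammar σ hS.toFinset
  · rintro rfl
    exact splittingGrammar_derives σ hS.toFinset (by rwa [hS.coe_toFinset]) w (by simpa using hm)

end SplittingGrammar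

namespace Subgroup.IsComplement

open FreeMonoid

variable {G : Type*} [Group G] {H : Subgroup G} {T : Set G} (hT : IsComplement (H : Set G) T)
  {β : Type*} (e : H ≃* FreeGroup β)

noncomputable def freeCoord (g : G) : FreeGroup β := e (hT.equiv g).1

theorem freeCoord_mul (g s : G) :
    hT.freeCoord e (g * s) = hT.freeCoord e g * hT.freeCoord e ((hT.equiv g).2 * s) := by
  have hgs : g * s = ((hT.equiv g).1 : G) * ((hT.equiv g).2 * s) := by
    rw [← mul_assoc, equiv_fst_mul_equiv_snd]
  rw [freeCoord, hgs, equiv_mul_left, map_mul]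
  rfl

theorem freeCoord_of_mem {t : G} (ht : t ∈ T) : hT.freeCoord e t = 1 := by
  rw [freeCoord, hT.equiv_fst_eq_one_of_mem_of_one_mem H.one_mem ht]
  exact map_one e

theorem exists_norm_freeCoord_mul_le [DecidableEq β] {α : Type*} [Finite α] (hTfin : T.Finite)
    (σ : FreeMonoid α →* G) : ∃ C, ∀ t ∈ T, ∀ a, (hT.freeCoord e (t * σ (of a))).norm ≤ C := by
  obtain ⟨C, hC⟩ := ((hTfin.prod Set.finite_univ).image
    fun p : G × α => (hT.freeCoord e (p.1 * σ (of p.2))).norm).bddAbove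
  exact ⟨C, fun t ht a => hC ⟨(t, a), ⟨ht, trivial⟩, rfl⟩⟩

variable [DecidableEq β]

/-- Elements `g` such that reading `g` from some `t ∈ T` moves by at most `K` in the tree. -/
def boundedElements (K : ℕ) : Set G :=
  {g | ∃ t ∈ T, (hT.freeCoord e (t * g)).norm ≤ K}

theorem one_mem_boundedElements (K : ℕ) : 1 ∈ hT.boundedElements e K := by
  obtain ⟨t, ht⟩ := hT.nonempty_right
  refine ⟨t, ht, ?_⟩
  rw [mul_one, hT.freeCoord_of_mem e ht, FreeGroup.norm_one]
  exact K.zero_le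

theorem finite_boundedElements [Finite β] (hTfin : T.Finite) (K : ℕ) :
    (hT.boundedElements e K).Finite := by
  refine ((hTfin.prod ((FreeGroup.finite_setOf_norm_le K).prod hTfin)).image
    fun p : G × FreeGroup β × G => p.1⁻¹ * e.symm p.2.1 * p.2.2).subset ?_
  rintro g ⟨t, ht, hg⟩
  refine ⟨(t, hT.freeCoord e (t * g), (hT.equiv (t * g)).2), ⟨ht, hg, (hT.equiv (t * g)).2.2⟩, ?_⟩
  simp only [freeCoord, MulEquiv.symm_apply_apply, mul_assoc, equiv_fst_mul_equiv_snd,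
    inv_mul_cancel_left]

theorem isSplittingSet_boundedElements {α : Type*} (σ : FreeMonoid α →* G) {C : ℕ}
    (hC : ∀ t ∈ T, ∀ a, (hT.freeCoord e (t * σ (of a))).norm ≤ C) :
    IsSplittingSet σ (hT.boundedElements e (4 * C + 4)) := by
  rintro w hw ⟨t, ht, hK⟩
  let f (i : ℕ) : FreeGroup β := hT.freeCoord e (t * σ (ofList (w.take i)))
  have hstep : ∀ i < w.length, ((f i)⁻¹ * f (i + 1)).norm ≤ C := by
    intro i hi
    have hsucc : f (i + 1) =
        f i * hT.freeCoord e ((hT.equiv (t * σ (ofList (w.take i)))).2 * σ (of w[i])) := by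
      rw [← freeCoord_mul, mul_assoc, ← map_mul, ← ofList_singleton, ← ofList_append,
        List.take_concat_get']
    rw [hsucc, inv_mul_cancel_left]
    exact hC _ (hT.equiv _).2.2 _
  have hlast : f w.length = hT.freeCoord e (t * σ (ofList w)) := by simp only [f, List.take_length]
  obtain ⟨i, hi0, hiw, hu, hv⟩ := FreeGroup.exists_split_of_norm_le f
    (by simp only [f, List.take_zero, ofList_nil, map_one, mul_one, hT.freeCoord_of_mem e ht])
    hstep hw (hlast ▸ hK)
  have hdrop : hT.freeCoord e ((hT.equiv (t * σ (ofList (w.take i)))).2 * σ (ofList (w.drop i))) =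
      (f i)⁻¹ * f w.length := by
    rw [hlast, eq_inv_mul_iff_mul_eq, ← freeCoord_mul, mul_assoc, ← map_mul, ← ofList_append,
      List.take_append_drop]
  exact ⟨i, hi0, hiw, ⟨t, ht, hu⟩, _, (hT.equiv _).2.2, hdrop ▸ hv⟩

end Subgroup.IsComplement

theorem wordProblem_contextFree_of_virtually_free_general {α : Type} [Fintype α]
    {G : Type} [Group G]
    (H : Subgroup G) (hidx : H.FiniteIndex) (n : ℕ)
    (e : H ≃* FreeGroup (Fin n))
    (σ : FreeMonoid α →* G) :
    Language.IsContextFree {w : List α | σ (FreeMonoid.ofList w) = 1} := by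
  classical
  obtain ⟨T, hT, -⟩ := Subgroup.exists_isComplement_right H 1
  have hTfin : T.Finite := Set.finite_coe_iff.mp (hT.finite_right_iff.mpr hidx)
  obtain ⟨C, hC⟩ := hT.exists_norm_freeCoord_mul_le e hTfin σ
  exact isContextFree_setOf_eq_of_isSplittingSet σ (hT.finite_boundedElements e hTfin _)
    (hT.one_mem_boundedElements e _) (hT.isSplittingSet_boundedElements e σ hC)

/-- Section 9 of the paper: every finitely generated group with a finitely generated
free subgroup of finite index has a context-free word problem (with respect to any
choice of generators `σ : Σ* → G`). -/
theorem wordProblem_contextFree_of_virtually_free {α : Type} [Fintype α]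
    {G : Type} [Group G]
    (H : Subgroup G) (hidx : H.FiniteIndex) (n : ℕ)
    (e : H ≃* FreeGroup (Fin n))
    (σ : FreeMonoid α →* G) (hσ : Function.Surjective σ) :
    Language.IsContextFree {w : List α | σ (FreeMonoid.ofList w) = 1} :=
  wordProblem_contextFree_of_virtually_free_general H hidx n e σ
end

section
/- For every context-free grammar g over a terminal alphabet T there is a context-free grammar g' over T generating the same language such that the right-hand side of every production of g' either consists entirely of nonterminal symbols, or is a single terminal symbol, or is the empty word. -/
/-!
Replace every terminal `t` on a right-hand side by a fresh nonterminal `[t]` with the single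
production `[t] → t`. Mapping each symbol of the old grammar to itself simulates a step of the
old grammar by one step followed by expansions of the `[t]`, and mapping `[t]` back to `t`
simulates a step of the new grammar by at most one step of the old one.
-/

namespace Symbol

variable {T N : Type*}

def liftNT : Symbol T N → Symbol T (N ⊕ T)
  | terminal t => terminal t
  | nonterminal n => nonterminal (.inl n)

def hideTerminal : Symbol T N → Symbol T (N ⊕ T)
  | terminal t => nonterminal (.inr t)
  | nonterminal n => nonterminal (.inl n)

def revealTerminal : Symbol T (N ⊕ T) → Symbol T N
  | terminal t => terminal t
  | nonterminal (.inl n) => nonterminal n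
  | nonterminal (.inr t) => terminal t

@[simp]
lemma revealTerminal_comp_hideTerminal :
    (revealTerminal ∘ hideTerminal : Symbol T N → Symbol T N) = id := by
  funext s
  cases s <;> rfl

def terminal? : Symbol T N → Option T
  | terminal t => some t
  | nonterminal _ => none

@[simp]
lemma terminal?_eq_some {s : Symbol T N} {t : T} : s.terminal? = some t ↔ s = terminal t := by
  cases s <;> simp [terminal?]

end Symbol

namespace ContextFreeGrammar

variable {T : Type*}

theorem Derives.map {g₁ g₂ : ContextFreeGrammar T} {f : Symbol T g₁.NT → Symbol T g₂.NT}
    (hf : ∀ r ∈ g₁.rules, g₂.Derives [f (.nonterminal r.input)] (r.output.map f))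
    {u v : List (Symbol T g₁.NT)} (huv : g₁.Derives u v) :
    g₂.Derives (u.map f) (v.map f) := by
  induction huv with
  | refl => rfl
  | tail _ hvw ih =>
    obtain ⟨r, hr, hrw⟩ := hvw
    obtain ⟨p, q, rfl, rfl⟩ := hrw.exists_parts
    simp only [List.map_append, List.map_cons, List.map_nil] at ih ⊢
    exact ih.trans (((hf r hr).append_left (p.map f)).append_right (q.map f))

theorem language_le_of_map {g₁ g₂ : ContextFreeGrammar T} {f : Symbol T g₁.NT → Symbol T g₂.NT}
    (hf : ∀ r ∈ g₁.rules, g₂.Derives [f (.nonterminal r.input)] (r.output.map f))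
    (hterminal : ∀ t, f (.terminal t) = .terminal t)
    (hinitial : f (.nonterminal g₁.initial) = .nonterminal g₂.initial) :
    g₁.language ≤ g₂.language := by
  intro w (hw : w ∈ g₁.language)
  have hmap : (w.map Symbol.terminal).map f = w.map Symbol.terminal := by
    simp [List.map_map, Function.comp_def, hterminal]
  rw [mem_language_iff] at hw
  exact (mem_language_iff _ _).2 (by simpa [hinitial, hmap] using Derives.map hf hw)

end ContextFreeGrammar

namespace ContextFreeGrammar

variable {T : Type} (g : ContextFreeGrammar T)

open Classical in
noncomputable def terminals : Finset T :=
  g.rules.biUnion fun r => (r.output.filterMap Symbol.terminal?).toFinset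

lemma mem_terminals_of_mem_output {g : ContextFreeGrammar T} {r : ContextFreeRule T g.NT} (hr : r ∈ g.rules)
    {t : T} (ht : Symbol.terminal t ∈ r.output) : t ∈ g.terminals := by
  simp only [terminals, Finset.mem_biUnion, List.mem_toFinset, List.mem_filterMap,
    Symbol.terminal?_eq_some]
  exact ⟨r, hr, _, ht, rfl⟩

def hideTerminalsRule (r : ContextFreeRule T g.NT) : ContextFreeRule T (g.NT ⊕ T) :=
  ⟨.inl r.input, r.output.map Symbol.hideTerminal⟩

def revealRule (t : T) : ContextFreeRule T (g.NT ⊕ T) :=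
  ⟨.inr t, [.terminal t]⟩

open Classical in
noncomputable abbrev separateTerminals : ContextFreeGrammar T where
  NT := g.NT ⊕ T
  initial := .inl g.initial
  rules := g.rules.image g.hideTerminalsRule ∪ g.terminals.image g.revealRule

variable {g}

lemma mem_separateTerminals_rules {r : ContextFreeRule T (g.NT ⊕ T)} :
    r ∈ g.separateTerminals.rules ↔
      (∃ r₀ ∈ g.rules, g.hideTerminalsRule r₀ = r) ∨ ∃ t ∈ g.terminals, g.revealRule t = r := by
  simp only [separateTerminals, Finset.mem_union, Finset.mem_image]

lemma derives_hideTerminal_liftNT {l : List (Symbol T g.NT)}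
    (hl : ∀ t, Symbol.terminal t ∈ l → t ∈ g.terminals) :
    g.separateTerminals.Derives (l.map Symbol.hideTerminal) (l.map Symbol.liftNT) := by
  induction l with
  | nil => rfl
  | cons s l ih =>
    have htail := (ih fun t ht => hl t (List.mem_cons_of_mem _ ht)).append_left
    cases s with
    | nonterminal n => exact htail [.nonterminal (.inl n)]
    | terminal t =>
      have hhead : g.separateTerminals.Produces
          (.nonterminal (.inr t) :: l.map Symbol.hideTerminal)
          (.terminal t :: l.map Symbol.hideTerminal) :=
        ⟨g.revealRule t, mem_separateTerminals_rules.2 (.inr ⟨t, hl t List.mem_cons_self, rfl⟩),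
          .head _⟩
      exact hhead.trans_derives (htail [.terminal t])

lemma language_le_separateTerminals : g.language ≤ g.separateTerminals.language := by
  refine language_le_of_map (f := Symbol.liftNT) (fun r hr => ?_) (fun _ => rfl) rfl
  have hhide : g.separateTerminals.Produces [.nonterminal (.inl r.input)]
      (r.output.map Symbol.hideTerminal) :=
    ⟨g.hideTerminalsRule r, mem_separateTerminals_rules.2 (.inl ⟨r, hr, rfl⟩),
      ContextFreeRule.Rewrites.input_output⟩
  exact hhide.trans_derives (derives_hideTerminal_liftNT fun t ht => mem_terminals_of_mem_output hr ht)

lemma separateTerminals_language_le : g.separateTerminals.language ≤ g.language := by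
  refine language_le_of_map (f := Symbol.revealTerminal) (fun r hr => ?_) (fun _ => rfl) rfl
  obtain ⟨r₀, hr₀, rfl⟩ | ⟨t, -, rfl⟩ := mem_separateTerminals_rules.1 hr
  · simpa [hideTerminalsRule, Symbol.revealTerminal] using
      Produces.single ⟨r₀, hr₀, ContextFreeRule.Rewrites.input_output⟩
  · rfl

lemma separateTerminals_language : g.separateTerminals.language = g.language :=
  separateTerminals_language_le.antisymm language_le_separateTerminals

lemma separateTerminals_rules_output {r : ContextFreeRule T (g.NT ⊕ T)}
    (hr : r ∈ g.separateTerminals.rules) :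
    (∀ s ∈ r.output, ∃ n, s = .nonterminal n) ∨ ∃ t : T, r.output = [.terminal t] := by
  obtain ⟨r₀, -, rfl⟩ | ⟨t, -, rfl⟩ := mem_separateTerminals_rules.1 hr
  · left
    intro s hs
    obtain ⟨s₀, -, rfl⟩ := List.mem_map.1 hs
    cases s₀ <;> exact ⟨_, rfl⟩
  · exact .inr ⟨t, rfl⟩

end ContextFreeGrammar

/-- Lemma 9.4: every context-free grammar can be replaced by one generating the same
language in which the right-hand side of every production consists entirely of
nonterminals, or is a single terminal, or is the empty word. -/
theorem contextFreeGrammar_normalize {T : Type} (g : ContextFreeGrammar T) :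
    ∃ g' : ContextFreeGrammar T, g'.language = g.language ∧
      ∀ r ∈ g'.rules,
        (∀ s ∈ r.output, ∃ n, s = Symbol.nonterminal n) ∨
        (∃ t : T, r.output = [Symbol.terminal t]) ∨
        r.output = [] :=
  ⟨g.separateTerminals, ContextFreeGrammar.separateTerminals_language,
    fun _ hr => (ContextFreeGrammar.separateTerminals_rules_output hr).imp_right .inl⟩
end
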